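/- Let E be a finite meet-semilattice and let A be the unitization over ℂ of the semigroup algebra MonoidAlgebra ℂ E. For e ∈ E set p_e := e · ∏_{f ∈ E, e ⊓ f ≠ e} (1 − f) ∈ A. Then the element u := ∑_{e ∈ E} p_e satisfies u · f = f in A for every f ∈ E; that is, u is a multiplicative identity for the linear span of E in A. -/

import Mathlib

/-! Only the multiplicativity `φ (e ⊓ f) = φ e * φ f` of the basis map `φ` matters, so the
`φ f` are commuting idempotents. For a lower set `S` and a maximal `m ∈ S`, the factor `φ m`
turns each `1 - φ g` with `g ∈ S \ {m}` into `1 - φ (m ⊓ g)` with `m ⊓ g < m`, and repeated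
factors are idempotent; hence `p_m = φ m ∏_{g ∈ S \ {m}} (1 - φ g)`, and peeling off maximal
elements gives `∑_{e ∈ S} p_e = 1 - ∏_{g ∈ S} (1 - φ g)`. For `S = E` the product contains
`1 - φ f`, which is killed by `φ f`. -/

/-- A meet-semilattice regarded as a commutative semigroup with product `e * f = e ⊓ f`. -/
instance semilatticeInfCommSemigroup (E : Type*) [SemilatticeInf E] : CommSemigroup E where
  mul := (· ⊓ ·)
  mul_assoc := inf_assoc
  mul_comm := inf_comm

/-- The canonical image of `e : E` in the unitization over `ℂ` of the semigroup
algebra `MonoidAlgebra ℂ E`. -/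
noncomputable def semilatticeBasis {E : Type*} [SemilatticeInf E] (e : E) :
    Unitization ℂ (MonoidAlgebra ℂ E) :=
  Unitization.inr (MonoidAlgebra.single e (1 : ℂ))

/-- The element `p_e = e ∏_{f : e ⊓ f ≠ e} (1 - f)`. -/
noncomputable def minProj {E : Type*} [SemilatticeInf E] [Fintype E] [DecidableEq E] (e : E) :
    Unitization ℂ (MonoidAlgebra ℂ E) :=
  semilatticeBasis e *
    ∏ f ∈ Finset.univ.filter (fun f => e ⊓ f ≠ e), (1 - semilatticeBasis f)

open Finset

section CommMonoid

variable {M ι κ : Type*} [CommMonoid M]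

theorem Finset.mul_prod_congr_of_mul_eq {m : M} {s : Finset ι} {x y : ι → M}
    (h : ∀ i ∈ s, m * x i = m * y i) : m * ∏ i ∈ s, x i = m * ∏ i ∈ s, y i := by
  classical
  induction s using Finset.induction_on with
  | empty => rfl
  | insert a s ha ih =>
    rw [prod_insert ha, prod_insert ha, mul_left_comm, ih fun i hi ↦ h i (mem_insert_of_mem hi),
      ← mul_assoc, mul_comm (x a), h a (mem_insert_self a s), mul_assoc]

theorem Finset.prod_comp_of_isIdempotentElem [DecidableEq κ] {s : Finset ι} (g : ι → κ)
    {x : κ → M} (hx : ∀ k, IsIdempotentElem (x k)) :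
    ∏ i ∈ s, x (g i) = ∏ k ∈ s.image g, x k := by
  rw [prod_comp]
  refine prod_congr rfl fun k hk ↦ (hx k).pow_eq ?_
  obtain ⟨i, hi, rfl⟩ := mem_image.mp hk
  exact (card_pos.mpr ⟨i, by simp [hi]⟩).ne'

end CommMonoid

namespace SemilatticeInf

variable {E R : Type*} [SemilatticeInf E] [CommRing R] (φ : E →ₙ* R)

theorem map_inf_eq_mul (a b : E) : φ (a ⊓ b) = φ a * φ b := map_mul φ a b

theorem isIdempotentElem_map (a : E) : IsIdempotentElem (φ a) := by
  rw [IsIdempotentElem, ← map_inf_eq_mul, inf_idem]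

theorem map_mul_one_sub_map (a b : E) : φ a * (1 - φ b) = φ a * (1 - φ (a ⊓ b)) := by
  rw [mul_sub, mul_sub, map_inf_eq_mul, ← mul_assoc, (isIdempotentElem_map φ a).eq]

theorem prod_one_sub_map_mul_map {S : Finset E} {f : E} (hf : f ∈ S) :
    (∏ g ∈ S, (1 - φ g)) * φ f = 0 := by
  classical
  rw [← mul_prod_erase S _ hf, mul_right_comm, (isIdempotentElem_map φ f).one_sub_mul_self,
    zero_mul]

variable [DecidableEq E]

theorem map_mul_prod_one_sub_map_eq_image (m : E) (X : Finset E) :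
    φ m * ∏ g ∈ X, (1 - φ g) = φ m * ∏ g ∈ X.image (m ⊓ ·), (1 - φ g) := by
  rw [mul_prod_congr_of_mul_eq fun g _ ↦ map_mul_one_sub_map φ m g,
    prod_comp_of_isIdempotentElem (m ⊓ ·) fun g ↦ (isIdempotentElem_map φ g).one_sub]

theorem coe_image_inf_left_eq_Iio {m : E} {X : Finset E} (hX : ∀ g ∈ X, ¬ m ≤ g)
    (hlt : ∀ g < m, g ∈ X) : (X.image (m ⊓ ·) : Set E) = Set.Iio m := by
  ext g
  simp only [coe_image, Set.mem_image, mem_coe, Set.mem_Iio]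
  constructor
  · rintro ⟨h, hh, rfl⟩
    exact inf_le_left.lt_of_ne fun he ↦ hX h hh (inf_eq_left.mp he)
  · exact fun hg ↦ ⟨g, hlt g hg, inf_eq_right.mpr hg.le⟩

variable [Fintype E]

noncomputable def minProjOf (e : E) : R :=
  φ e * ∏ f ∈ univ.filter (fun f ↦ e ⊓ f ≠ e), (1 - φ f)

theorem minProjOf_eq_map_mul_prod {m : E} {X : Finset E} (hX : ∀ g ∈ X, ¬ m ≤ g)
    (hlt : ∀ g < m, g ∈ X) : minProjOf φ m = φ m * ∏ g ∈ X, (1 - φ g) := by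
  have hD : ∀ g ∈ univ.filter (fun f ↦ m ⊓ f ≠ m), ¬ m ≤ g := by simp [inf_eq_left]
  have hDlt : ∀ g < m, g ∈ univ.filter (fun f ↦ m ⊓ f ≠ m) := fun g hg ↦ by
    simpa [inf_eq_left] using hg.not_ge
  have himage : (univ.filter (fun f ↦ m ⊓ f ≠ m)).image (m ⊓ ·) = X.image (m ⊓ ·) :=
    coe_inj.mp ((coe_image_inf_left_eq_Iio hD hDlt).trans (coe_image_inf_left_eq_Iio hX hlt).symm)
  rw [minProjOf, map_mul_prod_one_sub_map_eq_image, map_mul_prod_one_sub_map_eq_image φ m X,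
    himage]

theorem minProjOf_eq_of_maximal {S : Finset E} (hS : IsLowerSet (S : Set E)) {m : E}
    (hm : Maximal (· ∈ S) m) : minProjOf φ m = φ m * ∏ g ∈ S.erase m, (1 - φ g) :=
  minProjOf_eq_map_mul_prod φ
    (fun _ hg hmg ↦ (mem_erase.mp hg).1 (hm.eq_of_le (mem_erase.mp hg).2 hmg).symm)
    fun _ hg ↦ mem_erase.mpr ⟨hg.ne, hS hg.le hm.prop⟩

theorem sum_minProjOf_of_isLowerSet (S : Finset E) (hS : IsLowerSet (S : Set E)) :
    ∑ e ∈ S, minProjOf φ e = 1 - ∏ g ∈ S, (1 - φ g) := by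
  induction S using Finset.strongInduction with
  | _ S ih =>
    rcases S.eq_empty_or_nonempty with rfl | hne
    · simp
    obtain ⟨m, hm⟩ := S.exists_maximal hne
    have hS' : IsLowerSet (S.erase m : Set E) := by
      rw [coe_erase]
      exact hS.erase fun b hb hmb ↦ (hm.eq_of_le hb hmb).symm
    rw [← add_sum_erase S _ hm.prop, ← mul_prod_erase S _ hm.prop,
      ih _ (erase_ssubset hm.prop) hS', minProjOf_eq_of_maximal φ hS hm]
    ring

theorem sum_minProjOf : ∑ e, minProjOf φ e = 1 - ∏ g, (1 - φ g) :=
  sum_minProjOf_of_isLowerSet φ univ (by simpa using isLowerSet_univ)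

theorem sum_minProjOf_mul_map (f : E) : (∑ e, minProjOf φ e) * φ f = φ f := by
  rw [sum_minProjOf, sub_mul, one_mul, prod_one_sub_map_mul_map φ (mem_univ f), sub_zero]

end SemilatticeInf

noncomputable def semilatticeBasisHom (E : Type*) [SemilatticeInf E] :
    E →ₙ* Unitization ℂ (MonoidAlgebra ℂ E) where
  toFun := semilatticeBasis
  map_mul' a b := by
    simp only [semilatticeBasis, ← Unitization.inr_mul, MonoidAlgebra.single_mul_single, one_mul]

/-- For a finite meet-semilattice `E`, the sum `u = ∑_{e ∈ E} p_e` satisfies `u f = f`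
for every `f ∈ E`; i.e. `u` is a multiplicative identity for the linear span of `E`. -/
theorem stmt_6 {E : Type*} [SemilatticeInf E] [Fintype E] [DecidableEq E] (f : E) :
    (∑ e : E, minProj e) * semilatticeBasis f = semilatticeBasis f :=
  SemilatticeInf.sum_minProjOf_mul_map (semilatticeBasisHom E) f
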